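/- Let X be a real normed vector space, θ = (k_r) a lacunary sequence, and p ≥ 1. The following are equivalent: (1) X is complete; (2) S_{N_θ}(∑ x_i) is a complete space for every weakly unconditionally Cauchy series ∑ x_i in X; (3) S_{S_θ}(∑ x_i) is a complete space for every weakly unconditionally Cauchy series ∑ x_i in X; (4) S_{w_p}(∑ x_i) is a complete space for every weakly unconditionally Cauchy series ∑ x_i in X. -/

import Mathlib

/-!
A summability method enters the argument only through the class of nonnegative real sequences it
sends to `0`, and only through a few closure properties of that class.

If `X` is complete, the summability space of a wuC series `∑ xᵢ` is closed in `ℓ∞`: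
Banach–Steinhaus bounds `‖∑_{i<k} aᵢ xᵢ‖` by `C ‖a‖`, so the limits attached to a convergent
sequence of coefficient sequences form a Cauchy sequence, and their limit serves for the limit
coefficients. Conversely, closedness puts every `c₀` coefficient sequence into the summability
space of an absolutely convergent series, and a Cauchy sequence summable by the method converges;
a telescoping series turns this into the convergence of every fast Cauchy sequence.

`N_θ` and `w_p` are weighted means (the latter of `p`-th powers), and `S_θ` is `N_θ` applied to
the indicators of the sets `{k | ε ≤ u k}`.
-/

open Filter Finset
open scoped Classical

/-- `θ` is a lacunary sequence: `θ 0 = 0`, `θ` is strictly increasing and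
`h_r = θ (r+1) - θ r → ∞`.  (Intervals `I_r = (θ r, θ (r+1)]`.) -/
def IsLacunary (θ : ℕ → ℕ) : Prop :=
  θ 0 = 0 ∧ StrictMono θ ∧ Tendsto (fun r => θ (r + 1) - θ r) atTop atTop

/-- `x` is strongly lacunary (`N_θ`) summable to `L`. -/
def NthetaSummable {X : Type*} [NormedAddCommGroup X] (θ : ℕ → ℕ) (x : ℕ → X) (L : X) : Prop :=
  Tendsto (fun r => (1 / (θ (r + 1) - θ r : ℝ)) * ∑ k ∈ Finset.Ioc (θ r) (θ (r + 1)), ‖x k - L‖)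
    atTop (nhds 0)

/-- `x` is lacunary statistically (`S_θ`) convergent to `L`. -/
def SthetaConvergent {X : Type*} [NormedAddCommGroup X] (θ : ℕ → ℕ) (x : ℕ → X) (L : X) : Prop :=
  ∀ ε > (0 : ℝ),
    Tendsto (fun r => (1 / (θ (r + 1) - θ r : ℝ)) *
      (((Finset.Ioc (θ r) (θ (r + 1))).filter (fun k => ε ≤ ‖x k - L‖)).card : ℝ))
      atTop (nhds 0)

/-- The series `∑ x i` is weakly unconditionally Cauchy: `∑ |f (x i)| < ∞`
for every continuous linear functional `f`. -/
def WUCSeries {X : Type*} [NormedAddCommGroup X] [NormedSpace ℝ X] (x : ℕ → X) : Prop :=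
  ∀ f : X →L[ℝ] ℝ, Summable fun i => |f (x i)|

/-- The `S_θ`-summability space of the series `∑ x i` inside `ℓ∞`. -/
def SthetaSummabilitySpace {X : Type*} [NormedAddCommGroup X] [NormedSpace ℝ X]
    (θ : ℕ → ℕ) (x : ℕ → X) : Set (lp (fun _ : ℕ => ℝ) ⊤) :=
  {a | ∃ L : X, SthetaConvergent θ (fun n => ∑ i ∈ Finset.range n, a i • x i) L}

/-- The `N_θ`-summability space of the series `∑ x i` inside `ℓ∞`. -/
def NthetaSummabilitySpace {X : Type*} [NormedAddCommGroup X] [NormedSpace ℝ X]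
    (θ : ℕ → ℕ) (x : ℕ → X) : Set (lp (fun _ : ℕ => ℝ) ⊤) :=
  {a | ∃ L : X, NthetaSummable θ (fun n => ∑ i ∈ Finset.range n, a i • x i) L}

/-- `x` is strongly `p`-Cesàro (`w_p`) summable to `L`. -/
def WpSummable {X : Type*} [NormedAddCommGroup X] (p : ℝ) (x : ℕ → X) (L : X) : Prop :=
  Tendsto (fun n : ℕ => (1 / (n : ℝ)) * ∑ i ∈ Finset.range n, ‖x i - L‖ ^ p) atTop (nhds 0)

/-- The `w_p`-summability space of the series `∑ x i` inside `ℓ∞`. -/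
def WpSummabilitySpace {X : Type*} [NormedAddCommGroup X] [NormedSpace ℝ X]
    (p : ℝ) (x : ℕ → X) : Set (lp (fun _ : ℕ => ℝ) ⊤) :=
  {a | ∃ L : X, WpSummable p (fun n => ∑ i ∈ Finset.range n, a i • x i) L}

open Topology
open scoped lp ENNReal

theorem tendsto_zero_of_forall_le_add {α ι : Type*} {l : Filter α} {l' : Filter ι} [l'.NeBot]
    {F : α → ℝ} {G : ι → α → ℝ} {c : ι → ℝ} (hF : ∀ m, 0 ≤ F m)
    (hG : ∀ n, Tendsto (G n) l (𝓝 0)) (hc : Tendsto c l' (𝓝 0))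
    (hle : ∀ n, ∀ᶠ m in l, F m ≤ G n m + c n) : Tendsto F l (𝓝 0) := by
  refine tendsto_order.2 ⟨fun a ha => .of_forall fun m => ha.trans_le (hF m), fun ε hε => ?_⟩
  obtain ⟨n, hn⟩ := (hc.eventually (gt_mem_nhds (half_pos hε))).exists
  filter_upwards [hle n, (hG n).eventually (gt_mem_nhds (half_pos hε))] with m hm hGm
  linarith

theorem exists_finitelySupported_tendsto_of_tendsto_zero (a : ℓ^∞(ℕ, ℝ))
    (ha : Tendsto (⇑a) atTop (𝓝 0)) :
    ∃ A : ℕ → ℓ^∞(ℕ, ℝ), (∀ N i, N ≤ i → A N i = 0) ∧ Tendsto A atTop (𝓝 a) := by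
  let A (N : ℕ) : ℓ^∞(ℕ, ℝ) :=
    ⟨fun i => if i < N then a i else 0, (lp.memℓp a).mono' fun i => by split_ifs <;> simp⟩
  refine ⟨A, fun N i hi => if_neg hi.not_gt, Metric.tendsto_atTop.2 fun ε hε => ?_⟩
  obtain ⟨N, hN⟩ := Metric.tendsto_atTop.1 ha (ε / 2) (half_pos hε)
  refine ⟨N, fun n hn => ?_⟩
  rw [dist_eq_norm]
  refine (lp.norm_le_of_forall_le (half_pos hε).le fun i => ?_).trans_lt (half_lt_self hε)
  change ‖(if i < n then a i else 0) - a i‖ ≤ ε / 2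
  split_ifs with hi
  · simpa using (half_pos hε).le
  · simpa using (hN i (hn.trans (not_lt.1 hi))).le

section WUC

variable {X : Type*} [NormedAddCommGroup X] [NormedSpace ℝ X]

theorem WUCSeries.of_summable_norm {x : ℕ → X} (hx : Summable fun i => ‖x i‖) : WUCSeries x :=
  fun f => (hx.mul_left ‖f‖).of_nonneg_of_le (fun _ => abs_nonneg _) fun i => f.le_opNorm (x i)

theorem WUCSeries.exists_norm_sum_smul_le {x : ℕ → X} (hx : WUCSeries x) :
    ∃ C, 0 ≤ C ∧ ∀ (a : ℓ^∞(ℕ, ℝ)) (k : ℕ), ‖∑ i ∈ range k, a i • x i‖ ≤ C * ‖a‖ := by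
  let g (v : ℕ × Metric.closedBall (0 : ℓ^∞(ℕ, ℝ)) 1) : StrongDual ℝ (StrongDual ℝ X) :=
    NormedSpace.inclusionInDoubleDualLi ℝ (∑ i ∈ range v.1, v.2.1 i • x i)
  have hg : ∀ f, ∃ C, ∀ v, ‖g v f‖ ≤ C := fun f => ⟨∑' i, |f (x i)|, fun ⟨k, a, ha⟩ => by
    have ha' : ∀ i, |a i| ≤ 1 := fun i =>
      (lp.norm_apply_le_norm ENNReal.top_ne_zero a i).trans (by simpa using ha)
    calc ‖g (k, ⟨a, ha⟩) f‖ = |∑ i ∈ range k, a i * f (x i)| := by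
          change |f (∑ i ∈ range k, a i • x i)| = _
          simp [map_sum]
      _ ≤ ∑ i ∈ range k, |f (x i)| := (abs_sum_le_sum_abs _ _).trans <| sum_le_sum fun i _ => by
          rw [abs_mul]; exact mul_le_of_le_one_left (abs_nonneg _) (ha' i)
      _ ≤ ∑' i, |f (x i)| := (hx f).sum_le_tsum _ fun i _ => abs_nonneg _⟩
  obtain ⟨C, hC⟩ := banach_steinhaus hg
  have hball (a : ℓ^∞(ℕ, ℝ)) (ha : ‖a‖ ≤ 1) (k : ℕ) : ‖∑ i ∈ range k, a i • x i‖ ≤ C := by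
    simpa [g, (NormedSpace.inclusionInDoubleDualLi ℝ).norm_map] using hC (k, ⟨a, by simpa using ha⟩)
  refine ⟨C, (norm_nonneg _).trans (hball 0 (by simp) 0), fun a k => ?_⟩
  rcases eq_or_ne a 0 with rfl | ha
  · simp
  have hsum : ∑ i ∈ range k, a i • x i = ‖a‖ • ∑ i ∈ range k, (‖a‖⁻¹ • a) i • x i := by
    simp [smul_sum, smul_smul, ha]
  rw [hsum, norm_smul, norm_norm, mul_comm]
  exact mul_le_mul_of_nonneg_right (hball _ (norm_smul_inv_norm ha).le k) (norm_nonneg a)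

end WUC

/-- `P u` reads "the nonnegative sequence `u` tends to `0` in the sense of a summability method";
a sequence `S` in a normed space is then summable to `L` when `P (‖S · - L‖)`. -/
structure IsNullMethod (P : (ℕ → ℝ) → Prop) : Prop where
  of_eventually_eq_zero {u : ℕ → ℝ} : (∀ᶠ k in atTop, u k = 0) → P u
  frequently_lt {u : ℕ → ℝ} : 0 ≤ u → P u → ∀ c > 0, ∃ᶠ k in atTop, u k < c
  sup {u v : ℕ → ℝ} : 0 ≤ u → 0 ≤ v → P u → P v → P (u ⊔ v)
  const_mul {u : ℕ → ℝ} {c : ℝ} : 0 < c → 0 ≤ u → P u → P (c • u)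
  of_le_add {u : ℕ → ℝ} (v : ℕ → ℕ → ℝ) (τ : ℕ → ℝ) : 0 ≤ u → (∀ n, 0 ≤ v n) → (∀ n, P (v n)) →
    (∀ n k, u k ≤ v n k + τ n) → Tendsto τ atTop (𝓝 0) → P u

def summabilitySpace {X : Type*} [NormedAddCommGroup X] [NormedSpace ℝ X]
    (P : (ℕ → ℝ) → Prop) (x : ℕ → X) : Set ℓ^∞(ℕ, ℝ) :=
  {a | ∃ L : X, P fun n => ‖∑ i ∈ range n, a i • x i - L‖}

namespace IsNullMethod

variable {P : (ℕ → ℝ) → Prop}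

theorem mono (hP : IsNullMethod P) {u v : ℕ → ℝ} (hu : 0 ≤ u) (hv : 0 ≤ v) (huv : u ≤ v)
    (hPv : P v) : P u :=
  hP.of_le_add (fun _ => v) 0 hu (fun _ => hv) (fun _ => hPv) (fun _ k => by simpa using huv k)
    tendsto_const_nhds

section Normed

variable {X : Type*} [NormedAddCommGroup X]

theorem tendsto_of_cauchySeq (hP : IsNullMethod P) {S : ℕ → X} {L : X} (hS : CauchySeq S)
    (hL : P fun k => ‖S k - L‖) : Tendsto S atTop (𝓝 L) := by
  refine Metric.tendsto_atTop.2 fun ε hε => ?_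
  obtain ⟨N, hN⟩ := Metric.cauchySeq_iff.1 hS (ε / 2) (half_pos hε)
  obtain ⟨k, hkN, hk⟩ :=
    (hP.frequently_lt (fun _ => norm_nonneg _) hL (ε / 2) (half_pos hε)).forall_exists_of_atTop N
  refine ⟨N, fun n hn => ?_⟩
  have := hN n hn k hkN
  calc dist (S n) L ≤ dist (S n) (S k) + dist (S k) L := dist_triangle _ _ _
    _ < ε / 2 + ε / 2 := add_lt_add this (by rwa [dist_eq_norm])
    _ = ε := add_halves ε

theorem norm_sub_le_of_forall_norm_sub_le (hP : IsNullMethod P) {S S' : ℕ → X} {L L' : X}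
    {B : ℝ} (hL : P fun k => ‖S k - L‖) (hL' : P fun k => ‖S' k - L'‖)
    (hB : ∀ k, ‖S k - S' k‖ ≤ B) : ‖L - L'‖ ≤ B := by
  refine le_of_forall_pos_le_add fun δ hδ => ?_
  obtain ⟨k, hk⟩ := (hP.frequently_lt (fun k => le_max_of_le_left (norm_nonneg (S k - L)))
    (hP.sup (fun _ => norm_nonneg _) (fun _ => norm_nonneg _) hL hL') (δ / 2) (half_pos hδ)).exists
  obtain ⟨hk, hk'⟩ := max_lt_iff.1 hk
  have h1 := norm_sub_le_norm_sub_add_norm_sub L (S k) L'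
  have h2 := norm_sub_le_norm_sub_add_norm_sub (S k) (S' k) L'
  rw [norm_sub_rev L (S k)] at h1
  linarith [hB k]

end Normed

variable {X : Type*} [NormedAddCommGroup X] [NormedSpace ℝ X]

theorem isClosed_summabilitySpace [CompleteSpace X] (hP : IsNullMethod P) {x : ℕ → X}
    (hx : WUCSeries x) : IsClosed (summabilitySpace P x) := by
  obtain ⟨C, hC0, hC⟩ := hx.exists_norm_sum_smul_le
  have hdiff (a b : ℓ^∞(ℕ, ℝ)) (k : ℕ) :
      ‖∑ i ∈ range k, a i • x i - ∑ i ∈ range k, b i • x i‖ ≤ C * ‖a - b‖ := by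
    simpa [← sum_sub_distrib, ← sub_smul] using hC (a - b) k
  refine IsSeqClosed.isClosed fun A a hA hAa => ?_
  choose L hL using hA
  have hLc : CauchySeq L := by
    obtain ⟨b, hb0, hbA, hb⟩ := cauchySeq_iff_le_tendsto_0.1 hAa.cauchySeq
    refine cauchySeq_iff_le_tendsto_0.2 ⟨fun N => C * b N, fun N => mul_nonneg hC0 (hb0 N),
      fun m n N hm hn => ?_, by simpa using hb.const_mul C⟩
    rw [dist_eq_norm]
    refine hP.norm_sub_le_of_forall_norm_sub_le (hL m) (hL n) fun k => (hdiff _ _ k).trans ?_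
    exact mul_le_mul_of_nonneg_left (dist_eq_norm (A m) (A n) ▸ hbA m n N hm hn) hC0
  obtain ⟨Z, hZ⟩ := cauchySeq_tendsto_of_complete hLc
  refine ⟨Z, hP.of_le_add _ (fun n => C * ‖a - A n‖ + ‖L n - Z‖) (fun _ => norm_nonneg _)
    (fun _ _ => norm_nonneg _) hL (fun n k => ?_) ?_⟩
  · have h1 := norm_sub_le_norm_sub_add_norm_sub (∑ i ∈ range k, a i • x i)
      (∑ i ∈ range k, A n i • x i) Z
    have h2 := norm_sub_le_norm_sub_add_norm_sub (∑ i ∈ range k, A n i • x i) (L n) Z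
    linarith [hdiff a (A n) k]
  · have h1 : Tendsto (fun n => ‖a - A n‖) atTop (𝓝 0) := by
      simpa [dist_eq_norm, norm_sub_rev] using tendsto_iff_dist_tendsto_zero.1 hAa
    have h2 : Tendsto (fun n => ‖L n - Z‖) atTop (𝓝 0) := by
      simpa [dist_eq_norm] using tendsto_iff_dist_tendsto_zero.1 hZ
    simpa using (h1.const_mul C).add h2

theorem mem_summabilitySpace_of_eventually_eq_zero (hP : IsNullMethod P) (x : ℕ → X)
    {a : ℓ^∞(ℕ, ℝ)} {N : ℕ} (ha : ∀ i, N ≤ i → a i = 0) : a ∈ summabilitySpace P x := by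
  refine ⟨∑ i ∈ range N, a i • x i, hP.of_eventually_eq_zero ?_⟩
  filter_upwards [eventually_ge_atTop N] with n hn
  rw [norm_sub_eq_zero_iff, ← sum_range_add_sum_Ico _ hn, add_eq_left]
  exact sum_eq_zero fun i hi => by rw [ha i (mem_Ico.1 hi).1, zero_smul]

theorem mem_summabilitySpace_of_tendsto_zero (hP : IsNullMethod P) {x : ℕ → X}
    (hclosed : IsClosed (summabilitySpace P x)) {a : ℓ^∞(ℕ, ℝ)}
    (ha : Tendsto (⇑a) atTop (𝓝 0)) : a ∈ summabilitySpace P x := by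
  obtain ⟨A, hA, hAa⟩ := exists_finitelySupported_tendsto_of_tendsto_zero a ha
  exact hclosed.mem_of_tendsto hAa
    (.of_forall fun N => hP.mem_summabilitySpace_of_eventually_eq_zero x (hA N))

/-- For a Cauchy sequence `(u n)` with `‖u (n+1) - u n‖ ≤ 4⁻ⁿ`, the series `∑ 2ⁿ (u (n+1) - u n)`
is absolutely convergent and its partial sums against the coefficients `2⁻ⁿ` telescope to
`u n - u 0`. -/
theorem completeSpace (hP : IsNullMethod P)
    (h : ∀ x : ℕ → X, WUCSeries x → IsClosed (summabilitySpace P x)) : CompleteSpace X := by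
  refine Metric.complete_of_convergent_controlled_sequences (fun n => (1 / 4 : ℝ) ^ n)
    (fun n => by positivity) fun u hu => ?_
  have hstep (n : ℕ) : ‖u (n + 1) - u n‖ ≤ (1 / 4 : ℝ) ^ n := by
    simpa [dist_eq_norm] using (hu n (n + 1) n n.le_succ le_rfl).le
  let x (n : ℕ) : X := (2 : ℝ) ^ n • (u (n + 1) - u n)
  have hx : WUCSeries x := by
    refine .of_summable_norm <| (summable_geometric_two).of_nonneg_of_le (fun _ => norm_nonneg _)
      fun n => ?_
    calc ‖x n‖ = 2 ^ n * ‖u (n + 1) - u n‖ := by simp [x, norm_smul]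
      _ ≤ 2 ^ n * (1 / 4) ^ n := by gcongr; exact hstep n
      _ = (1 / 2) ^ n := by rw [← mul_pow]; norm_num
  let a : ℓ^∞(ℕ, ℝ) := ⟨fun i => (1 / 2 : ℝ) ^ i, memℓp_infty ⟨1, by
    rintro _ ⟨i, rfl⟩
    simpa using pow_le_one₀ (by norm_num) (by norm_num : (1 / 2 : ℝ) ≤ 1)⟩⟩
  obtain ⟨L, hL⟩ := hP.mem_summabilitySpace_of_tendsto_zero (h x hx) (a := a)
    (tendsto_pow_atTop_nhds_zero_of_lt_one (by norm_num) (by norm_num))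
  have hsum (n : ℕ) : ∑ i ∈ range n, a i • x i = u n - u 0 := by
    rw [← sum_range_sub]
    refine sum_congr rfl fun i _ => ?_
    change (1 / 2 : ℝ) ^ i • (2 : ℝ) ^ i • (u (i + 1) - u i) = _
    rw [smul_smul, ← mul_pow]
    norm_num
  have hcauchy : CauchySeq u := cauchySeq_of_le_geometric (1 / 4) 1 (by norm_num) fun n => by
    simpa [dist_eq_norm, norm_sub_rev] using hstep n
  refine ⟨L + u 0, hP.tendsto_of_cauchySeq hcauchy ?_⟩
  convert hL using 3 with n
  rw [hsum]
  abel

theorem completeSpace_iff (hP : IsNullMethod P) :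
    CompleteSpace X ↔ ∀ x : ℕ → X, WUCSeries x → IsComplete (summabilitySpace P x) :=
  ⟨fun _ _ hx => (hP.isClosed_summabilitySpace hx).isComplete,
    fun h => hP.completeSpace fun x hx => (h x hx).isClosed⟩

end IsNullMethod

theorem rpow_le_two_rpow_mul_add_two_rpow_mul {s t d p : ℝ} (hs : 0 ≤ s) (ht : 0 ≤ t)
    (hp : 0 ≤ p) (h : s ≤ t + d) : s ^ p ≤ 2 ^ p * t ^ p + 2 ^ p * max d 0 ^ p := by
  set m := max d 0
  have hm : 0 ≤ m := le_max_right d 0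
  have hs2 : s ≤ 2 * max t m := by linarith [le_max_left t m, le_max_right t m, le_max_left d 0]
  calc s ^ p ≤ (2 * max t m) ^ p := Real.rpow_le_rpow hs hs2 hp
    _ = 2 ^ p * max t m ^ p := Real.mul_rpow zero_le_two (le_max_of_le_left ht)
    _ ≤ 2 ^ p * (t ^ p + m ^ p) := by
      gcongr
      rcases le_total t m with htm | htm
      · rw [max_eq_right htm]; linarith [Real.rpow_nonneg ht p]
      · rw [max_eq_left htm]; linarith [Real.rpow_nonneg hm p]
    _ = _ := mul_add _ _ _

def WeightedNull (w : ℕ → ℝ) (B : ℕ → Finset ℕ) (u : ℕ → ℝ) : Prop :=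
  Tendsto (fun r => w r * ∑ k ∈ B r, u k) atTop (𝓝 0)

theorem isNullMethod_weightedNull {w : ℕ → ℝ} {B : ℕ → Finset ℕ} (hw0 : ∀ r, 0 ≤ w r)
    (hw : Tendsto w atTop (𝓝 0)) (hwB : ∀ᶠ r in atTop, w r * #(B r) = 1) :
    IsNullMethod (WeightedNull w B) where
  of_eventually_eq_zero {u} hu := by
    obtain ⟨N, hN⟩ := eventually_atTop.1 hu
    refine squeeze_zero_norm (fun r => ?_) (by simpa using hw.mul_const (∑ k ∈ range N, |u k|))
    rw [norm_mul, Real.norm_of_nonneg (hw0 r)]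
    refine mul_le_mul_of_nonneg_left ?_ (hw0 r)
    rw [← sum_filter_of_ne (p := (· < N)) fun k _ hk => not_le.1 fun h => hk (hN k h)]
    refine (norm_sum_le _ _).trans (sum_le_sum_of_subset_of_nonneg (fun k hk => ?_)
      fun _ _ _ => norm_nonneg _)
    exact mem_range.2 (mem_filter.1 hk).2
  frequently_lt {u} hu hPu c hc := by
    by_contra hfreq
    obtain ⟨N, hN⟩ := eventually_atTop.1 (not_frequently.1 hfreq)
    have hlow : ∀ᶠ r in atTop, c - c * N * w r ≤ w r * ∑ k ∈ B r, u k := by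
      filter_upwards [hwB] with r hr
      have hcard : #{k ∈ B r | k < N} ≤ N := by
        simpa using card_le_card (s := {k ∈ B r | k < N}) (t := range N) fun k hk =>
          mem_range.2 (mem_filter.1 hk).2
      have hsum : c * #(B r) - c * N ≤ ∑ k ∈ B r, u k :=
        calc c * #(B r) - c * N ≤ c * #(B r) - c * #{k ∈ B r | k < N} := by
              gcongr
          _ = ∑ k ∈ B r, (c - c * if k < N then 1 else 0) := by
              rw [sum_sub_distrib, ← mul_sum, sum_boole, sum_const, nsmul_eq_mul, mul_comm]
          _ ≤ ∑ k ∈ B r, u k := sum_le_sum fun k _ => by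
              split_ifs with hk
              · simpa using hu k
              · simpa using not_lt.1 (hN k (not_lt.1 hk))
      calc c - c * N * w r = w r * (c * #(B r) - c * N) := by linear_combination -c * hr
        _ ≤ _ := mul_le_mul_of_nonneg_left hsum (hw0 r)
    have := le_of_tendsto_of_tendsto (by simpa using (hw.const_mul (c * N)).const_sub c) hPu hlow
    linarith
  sup {u v} hu hv hPu hPv := by
    refine squeeze_zero
      (fun r => mul_nonneg (hw0 r) (sum_nonneg fun k _ => le_max_of_le_left (hu k)))
      (fun r => ?_) (by simpa using hPu.add hPv)
    rw [← mul_add, ← sum_add_distrib]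
    exact mul_le_mul_of_nonneg_left (sum_le_sum fun k _ => max_le_add_of_nonneg (hu k) (hv k))
      (hw0 r)
  const_mul {u c} _ _ hPu := by
    refine (by simpa using hPu.const_mul c : Tendsto _ _ _).congr fun r => ?_
    simp [mul_sum, mul_left_comm]
  of_le_add {u} v τ hu _ hPv hle hτ := by
    refine tendsto_zero_of_forall_le_add (fun r => mul_nonneg (hw0 r) (sum_nonneg fun k _ => hu k))
      hPv hτ fun n => ?_
    filter_upwards [hwB] with r hr
    calc w r * ∑ k ∈ B r, u k ≤ w r * ∑ k ∈ B r, (v n k + τ n) :=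
          mul_le_mul_of_nonneg_left (sum_le_sum fun k _ => hle n k) (hw0 r)
      _ = w r * ∑ k ∈ B r, v n k + τ n := by
          rw [sum_add_distrib, sum_const, nsmul_eq_mul]; linear_combination τ n * hr

def StatisticalNull (P : (ℕ → ℝ) → Prop) (u : ℕ → ℝ) : Prop :=
  ∀ ε > 0, P fun k => if ε ≤ u k then 1 else 0

namespace IsNullMethod

variable {P : (ℕ → ℝ) → Prop}

theorem statistical (hP : IsNullMethod P) : IsNullMethod (StatisticalNull P) where
  of_eventually_eq_zero hu ε hε :=
    hP.of_eventually_eq_zero (hu.mono fun k hk => by simp [hk, hε.not_ge])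
  frequently_lt {u} _ hPu c hc :=
    (hP.frequently_lt (fun _ => by positivity) (hPu c hc) 1 one_pos).mono fun k hk =>
      not_le.1 fun h => by simp [h] at hk
  sup {u v} _ _ hPu hPv ε hε := by
    convert hP.sup (fun _ => by positivity) (fun _ => by positivity) (hPu ε hε) (hPv ε hε)
      using 2 with k
    simp only [Pi.sup_apply, le_max_iff]
    split_ifs <;> simp_all
  const_mul {u c} hc _ hPu ε hε := by
    convert hPu (ε / c) (div_pos hε hc) using 3 with k
    rw [Pi.smul_apply, smul_eq_mul, div_le_iff₀' hc]
  of_le_add {u} v τ _ _ hPv hle hτ ε hε := by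
    obtain ⟨n, hn⟩ := (hτ.eventually (gt_mem_nhds (half_pos hε))).exists
    refine hP.mono (fun _ => by positivity) (fun _ => by positivity) (fun k => ?_)
      (hPv n (ε / 2) (half_pos hε))
    dsimp only
    split_ifs with h1 h2
    · exact le_rfl
    · linarith [hle n k, not_le.1 h2]
    all_goals norm_num

theorem rpow (hP : IsNullMethod P) {p : ℝ} (hp : 0 < p) :
    IsNullMethod fun u => P fun k => u k ^ p where
  of_eventually_eq_zero hu := hP.of_eventually_eq_zero (hu.mono fun k hk => by simp [hk, hp.ne'])
  frequently_lt {u} hu hPu c hc :=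
    (hP.frequently_lt (fun k => Real.rpow_nonneg (hu k) p) hPu (c ^ p)
      (Real.rpow_pos_of_pos hc p)).mono fun k hk => (Real.rpow_lt_rpow_iff (hu k) hc.le hp).1 hk
  sup {u v} hu hv hPu hPv := by
    convert hP.sup (fun k => Real.rpow_nonneg (hu k) p) (fun k => Real.rpow_nonneg (hv k) p)
      hPu hPv using 2 with k
    rcases le_total (u k) (v k) with h | h
    · simp [max_eq_right h, max_eq_right (Real.rpow_le_rpow (hu k) h hp.le)]
    · simp [max_eq_left h, max_eq_left (Real.rpow_le_rpow (hv k) h hp.le)]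
  const_mul {u c} hc hu hPu := by
    convert hP.const_mul (Real.rpow_pos_of_pos hc p) (fun k => Real.rpow_nonneg (hu k) p) hPu
      using 2 with k
    simp [Real.mul_rpow hc.le (hu k)]
  of_le_add {u} v τ hu hv hPv hle hτ := by
    refine hP.of_le_add (fun n => (2 : ℝ) ^ p • fun k => v n k ^ p)
      (fun n => 2 ^ p * max (τ n) 0 ^ p) (fun k => Real.rpow_nonneg (hu k) p)
      (fun n k => mul_nonneg (by positivity) (Real.rpow_nonneg (hv n k) p))
      (fun n => hP.const_mul (by positivity) (fun k => Real.rpow_nonneg (hv n k) p) (hPv n))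
      (fun n k => rpow_le_two_rpow_mul_add_two_rpow_mul (hu k) (hv n k) hp.le (hle n k)) ?_
    have hτ' := (hτ.max (tendsto_const_nhds (x := (0 : ℝ)))).rpow_const (Or.inr hp.le)
    simpa [Real.zero_rpow hp.ne'] using hτ'.const_mul ((2 : ℝ) ^ p)

end IsNullMethod

theorem isNullMethod_ntheta {θ : ℕ → ℕ} (hθ : IsLacunary θ) :
    IsNullMethod
      (WeightedNull (fun r => 1 / (θ (r + 1) - θ r : ℝ)) fun r => Ioc (θ r) (θ (r + 1))) := by
  obtain ⟨-, hmono, hgap⟩ := hθ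
  have hcast (r : ℕ) : (θ (r + 1) - θ r : ℝ) = ((θ (r + 1) - θ r : ℕ) : ℝ) := by
    rw [Nat.cast_sub (hmono.monotone r.le_succ)]
  refine isNullMethod_weightedNull (fun r => ?_) ?_ (.of_forall fun r => ?_)
  · rw [hcast]; positivity
  · simp_rw [hcast, one_div]
    exact (tendsto_natCast_atTop_atTop.comp hgap).inv_tendsto_atTop
  · have : (θ r : ℝ) < θ (r + 1) := Nat.cast_lt.2 (hmono r.lt_succ_self)
    rw [Nat.card_Ioc, ← hcast]
    field_simp [sub_ne_zero.2 this.ne']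

theorem isNullMethod_stheta {θ : ℕ → ℕ} (hθ : IsLacunary θ) :
    IsNullMethod fun u => ∀ ε > 0, Tendsto (fun r => (1 / (θ (r + 1) - θ r : ℝ)) *
      (#{k ∈ Ioc (θ r) (θ (r + 1)) | ε ≤ u k} : ℝ)) atTop (𝓝 0) := by
  convert (isNullMethod_ntheta hθ).statistical using 1
  ext u
  simp only [StatisticalNull, WeightedNull, sum_boole]

theorem isNullMethod_wp {p : ℝ} (hp : 0 < p) :
    IsNullMethod fun u => WeightedNull (fun n => 1 / (n : ℝ)) range fun k => u k ^ p :=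
  (isNullMethod_weightedNull (fun n => by positivity) tendsto_one_div_atTop_nhds_zero_nat
    ((eventually_ge_atTop 1).mono fun n hn => by
      rw [card_range, one_div_mul_cancel (Nat.cast_ne_zero.2 (by omega))])).rpow hp

/-- Completeness of a normed space is characterized by completeness of the
`N_θ`-, `S_θ`- and `w_p`-summability spaces of all wuC series. -/
theorem completeSpace_tfae {X : Type*} [NormedAddCommGroup X] [NormedSpace ℝ X]
    (θ : ℕ → ℕ) (hθ : IsLacunary θ) (p : ℝ) (hp : 1 ≤ p) :
    [CompleteSpace X,
      ∀ x : ℕ → X, WUCSeries x → IsComplete (NthetaSummabilitySpace θ x),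
      ∀ x : ℕ → X, WUCSeries x → IsComplete (SthetaSummabilitySpace θ x),
      ∀ x : ℕ → X, WUCSeries x → IsComplete (WpSummabilitySpace p x)].TFAE := by
  tfae_have 1 ↔ 2 := (isNullMethod_ntheta hθ).completeSpace_iff
  tfae_have 1 ↔ 3 := (isNullMethod_stheta hθ).completeSpace_iff
  tfae_have 1 ↔ 4 := (isNullMethod_wp (zero_lt_one.trans_le hp)).completeSpace_iff
  tfae_finish
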